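/- arXiv:2310.06761 — 3 statements merged into one kernel-verified Lean document; each statement's English description precedes it below -/
import Mathlib

section
/- Let g be a Lie algebra with a vector space decomposition g = r ⊕ m ⊕ m⁻ where r, m, m⁻ are Lie subalgebras, [r,m] ⊆ m, [r,m⁻] ⊆ m⁻, and let p = r ⊕ m, p⁻ = r ⊕ m⁻, with p̃ = r ⋉ m^a the Inönü–Wigner contraction of p. Define a map ad* : p̃ → gl(p⁻) by: for x ∈ r and y ∈ p⁻, ad*x(y) = [x,y]; and for x ∈ m and y ∈ p⁻, ad*x(y) = pr_r([x,y]), where pr_r is the projection of g = r ⊕ m ⊕ m⁻ onto r. Then ad* is a morphism of Lie algebras from p̃ to gl(p⁻); i.e., for all x,x' ∈ p̃ and y ∈ p⁻, ad*x(ad*x'(y)) − ad*x'(ad*x(y)) = ad*([x,x']_p̃)(y). -/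
/-!
Write `x = a + b` with `a ∈ r`, `b ∈ m`, so that `ad* x = ad a + σ b` where `σ b = prr ∘ ad b`.
Since `ad a` preserves each summand of `g = r ⊕ m ⊕ m⁻`, it commutes with `prr`, whence
`[ad a, σ b] = σ [a, b]`. Moreover `σ b ∘ σ b' = 0`, because `σ b'` takes values in `r` and
`prr` kills `[m, r] ⊆ m`: this is exactly why `[m, m]` has to be contracted away. Expanding the
commutator of `ad* x` and `ad* x'` then gives `ad [a, a'] + σ ([a, b'] - [a', b]) = ad* [x, x']_p̃`,
as an identity of endomorphisms of all of `g`.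
-/

open LieAlgebra

section Projections

variable {k V : Type*} [Ring k] [AddCommGroup V] [Module k V]

structure IsSummandProjections (R M Mm : Submodule k V) (prr prm : V →ₗ[k] V) : Prop where
  isProj_left : LinearMap.IsProj R prr
  isProj_middle : LinearMap.IsProj M prm
  prr_eq_zero_of_mem_middle : ∀ x ∈ M, prr x = 0
  prr_eq_zero_of_mem_right : ∀ x ∈ Mm, prr x = 0
  prm_eq_zero_of_mem_left : ∀ x ∈ R, prm x = 0
  sub_sub_mem_right : ∀ x, x - prr x - prm x ∈ Mm

namespace IsSummandProjections

variable {R M Mm : Submodule k V} {prr prm : V →ₗ[k] V}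

theorem prr_add (h : IsSummandProjections R M Mm prr prm) {a b : V} (ha : a ∈ R) (hb : b ∈ M) :
    prr (a + b) = a := by
  rw [map_add, h.isProj_left.map_id a ha, h.prr_eq_zero_of_mem_middle b hb, add_zero]

theorem prm_add (h : IsSummandProjections R M Mm prr prm) {a b : V} (ha : a ∈ R) (hb : b ∈ M) :
    prm (a + b) = b := by
  rw [map_add, h.prm_eq_zero_of_mem_left a ha, h.isProj_middle.map_id b hb, zero_add]

theorem commute_of_mapsTo (h : IsSummandProjections R M Mm prr prm) {T : Module.End k V}
    (hR : Set.MapsTo T R R) (hM : Set.MapsTo T M M) (hMm : Set.MapsTo T Mm Mm) :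
    Commute prr T := by
  refine LinearMap.ext fun w => ?_
  have hw : w = prr w + prm w + (w - prr w - prm w) := by abel
  conv_lhs => rw [Module.End.mul_apply, hw]
  rw [Module.End.mul_apply, map_add, map_add, map_add, map_add,
    h.isProj_left.map_id _ (hR (h.isProj_left.map_mem w)),
    h.prr_eq_zero_of_mem_middle _ (hM (h.isProj_middle.map_mem w)),
    h.prr_eq_zero_of_mem_right _ (hMm (h.sub_sub_mem_right w)), add_zero, add_zero]

end IsSummandProjections

end Projections

section Coadjoint

variable {k g : Type*} [CommRing k] [LieRing g] [LieAlgebra k g]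
  {R M Mm : Submodule k g} {prr prm : g →ₗ[k] g}

def coadjointAction (prr prm : g →ₗ[k] g) (x : g) : Module.End k g :=
  ad k g (prr x) + prr * ad k g (prm x)

theorem ad_lie_eq_lie_ad (a b : g) : ad k g ⁅a, b⁆ = ⁅ad k g a, ad k g b⁆ :=
  LinearMap.ext (lie_lie a b)

theorem coadjointAction_add (h : IsSummandProjections R M Mm prr prm) {a b : g}
    (ha : a ∈ R) (hb : b ∈ M) :
    coadjointAction prr prm (a + b) = ad k g a + prr * ad k g b := by
  rw [coadjointAction, h.prr_add ha hb, h.prm_add ha hb]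

theorem lie_ad_proj_mul_ad (h : IsSummandProjections R M Mm prr prm)
    (hR : ∀ x ∈ R, ∀ y ∈ R, ⁅x, y⁆ ∈ R) (hRM : ∀ x ∈ R, ∀ y ∈ M, ⁅x, y⁆ ∈ M)
    (hRMm : ∀ x ∈ R, ∀ y ∈ Mm, ⁅x, y⁆ ∈ Mm) {a : g} (ha : a ∈ R) (b : g) :
    ⁅ad k g a, prr * ad k g b⁆ = prr * ad k g ⁅a, b⁆ := by
  have hcomm : Commute prr (ad k g a) :=
    h.commute_of_mapsTo (hR a ha) (hRM a ha) (hRMm a ha)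
  rw [ad_lie_eq_lie_ad, Ring.lie_def, Ring.lie_def, mul_sub, ← mul_assoc, ← hcomm.eq, mul_assoc,
    mul_assoc]

theorem proj_mul_ad_mul_proj_mul_ad_eq_zero (h : IsSummandProjections R M Mm prr prm)
    (hRM : ∀ x ∈ R, ∀ y ∈ M, ⁅x, y⁆ ∈ M) {b : g} (hb : b ∈ M) (b' : g) :
    prr * ad k g b * (prr * ad k g b') = 0 := by
  refine LinearMap.ext fun w => ?_
  have hz := h.isProj_left.map_mem ⁅b', w⁆
  simp only [Module.End.mul_apply, ad_apply, LinearMap.zero_apply]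
  rw [← lie_skew]
  exact h.prr_eq_zero_of_mem_middle _ (M.neg_mem (hRM _ hz b hb))

theorem lie_coadjointAction (h : IsSummandProjections R M Mm prr prm)
    (hR : ∀ x ∈ R, ∀ y ∈ R, ⁅x, y⁆ ∈ R) (hRM : ∀ x ∈ R, ∀ y ∈ M, ⁅x, y⁆ ∈ M)
    (hRMm : ∀ x ∈ R, ∀ y ∈ Mm, ⁅x, y⁆ ∈ Mm) {x x' : g} (hx : x ∈ R ⊔ M) (hx' : x' ∈ R ⊔ M) :
    ⁅coadjointAction prr prm x, coadjointAction prr prm x'⁆ =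
      coadjointAction prr prm (⁅x, x'⁆ - ⁅prm x, prm x'⁆) := by
  obtain ⟨a, ha, b, hb, rfl⟩ := Submodule.mem_sup.mp hx
  obtain ⟨a', ha', b', hb', rfl⟩ := Submodule.mem_sup.mp hx'
  have hbracket : ⁅a + b, a' + b'⁆ - ⁅prm (a + b), prm (a' + b')⁆ =
      ⁅a, a'⁆ + (⁅a, b'⁆ - ⁅a', b⁆) := by
    rw [h.prm_add ha hb, h.prm_add ha' hb', lie_add, add_lie, add_lie, ← lie_skew b a']
    abel
  rw [hbracket, coadjointAction_add h ha hb, coadjointAction_add h ha' hb',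
    coadjointAction_add h (hR a ha a' ha') (M.sub_mem (hRM a ha b' hb') (hRM a' ha' b hb)),
    map_sub, mul_sub, ad_lie_eq_lie_ad, ← lie_ad_proj_mul_ad h hR hRM hRMm ha,
    ← lie_ad_proj_mul_ad h hR hRM hRMm ha']
  simp only [Ring.lie_def, add_mul, mul_add, proj_mul_ad_mul_proj_mul_ad_eq_zero h hRM hb,
    proj_mul_ad_mul_proj_mul_ad_eq_zero h hRM hb']
  abel

end Coadjoint

theorem coadjoint_action_is_lie_morphism_general
    {k : Type*} [Field k]
    {g : Type*} [LieRing g] [LieAlgebra k g]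
    (R M Mm : Submodule k g) (prr prm : g →ₗ[k] g)
    -- `prr`, `prm` are the projections onto `r`, `m` for the decomposition `g = r ⊕ m ⊕ m⁻`
    (hprr : ∀ x : g, prr x ∈ R) (hprm : ∀ x : g, prm x ∈ M)
    (hprrR : ∀ x ∈ R, prr x = x) (hprrM : ∀ x ∈ M, prr x = 0) (hprrMm : ∀ x ∈ Mm, prr x = 0)
    (hprmR : ∀ x ∈ R, prm x = 0) (hprmM : ∀ x ∈ M, prm x = x)
    (hdecomp : ∀ x : g, x - prr x - prm x ∈ Mm)
    -- `r`, `m`, `m⁻` are Lie subalgebras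
    (hR : ∀ x ∈ R, ∀ y ∈ R, ⁅x, y⁆ ∈ R)
    -- `[r,m] ⊆ m` and `[r,m⁻] ⊆ m⁻`
    (hRM : ∀ x ∈ R, ∀ y ∈ M, ⁅x, y⁆ ∈ M)
    (hRMm : ∀ x ∈ R, ∀ y ∈ Mm, ⁅x, y⁆ ∈ Mm) :
    ∀ x ∈ R ⊔ M, ∀ x' ∈ R ⊔ M, ∀ y ∈ R ⊔ Mm,
      (fun a b => ⁅prr a, b⁆ + prr ⁅prm a, b⁆) x
          ((fun a b => ⁅prr a, b⁆ + prr ⁅prm a, b⁆) x' y)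
        - (fun a b => ⁅prr a, b⁆ + prr ⁅prm a, b⁆) x'
          ((fun a b => ⁅prr a, b⁆ + prr ⁅prm a, b⁆) x y)
      = (fun a b => ⁅prr a, b⁆ + prr ⁅prm a, b⁆) (⁅x, x'⁆ - ⁅prm x, prm x'⁆) y := by
  intro x hx x' hx' y _
  have h : IsSummandProjections R M Mm prr prm :=
    ⟨⟨hprr, hprrR⟩, ⟨hprm, hprmM⟩, hprrM, hprrMm, hprmR, hdecomp⟩
  exact LinearMap.congr_fun (lie_coadjointAction h hR hRM hRMm hx hx') y

/-- **The coadjoint action of the contraction `p̃ = r ⋉ mᵃ` on `p⁻`.**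
Let `g = r ⊕ m ⊕ m⁻` be a Lie algebra decomposed into Lie subalgebras with
`[r,m] ⊆ m` and `[r,m⁻] ⊆ m⁻`; let `p = r ⊕ m`, `p⁻ = r ⊕ m⁻`, and let
`p̃ = r ⋉ mᵃ` be the Inönü–Wigner contraction of `p` (same bracket as `p` except
`[m,m]_p̃ = 0`, i.e. `[x,x']_p̃ = ⁅x,x'⁆ - ⁅prm x, prm x'⁆`).  Here `prr`, `prm` are the
projections of `g` onto `r` resp. `m` coming from the decomposition.  The map
`ad* : p̃ → gl(p⁻)` is given by `ad*x(y) = ⁅x,y⁆` for `x ∈ r` and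
`ad*x(y) = prr ⁅x,y⁆` for `x ∈ m`; for a general `x ∈ p` this reads
`ad*x(y) = ⁅prr x, y⁆ + prr ⁅prm x, y⁆`.  The claim: `ad*` is a morphism of Lie
algebras from `p̃` to `gl(p⁻)`, i.e. for all `x, x' ∈ p` and `y ∈ p⁻`,
`ad*x(ad*x'(y)) − ad*x'(ad*x(y)) = ad*([x,x']_p̃)(y)`. -/
theorem coadjoint_action_is_lie_morphism
    {k : Type*} [Field k] [CharZero k]
    {g : Type*} [LieRing g] [LieAlgebra k g]
    (R M Mm : Submodule k g) (prr prm : g →ₗ[k] g)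
    -- `prr`, `prm` are the projections onto `r`, `m` for the decomposition `g = r ⊕ m ⊕ m⁻`
    (hprr : ∀ x : g, prr x ∈ R) (hprm : ∀ x : g, prm x ∈ M)
    (hprrR : ∀ x ∈ R, prr x = x) (hprrM : ∀ x ∈ M, prr x = 0) (hprrMm : ∀ x ∈ Mm, prr x = 0)
    (hprmR : ∀ x ∈ R, prm x = 0) (hprmM : ∀ x ∈ M, prm x = x) (hprmMm : ∀ x ∈ Mm, prm x = 0)
    (hdecomp : ∀ x : g, x - prr x - prm x ∈ Mm)
    -- `r`, `m`, `m⁻` are Lie subalgebras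
    (hR : ∀ x ∈ R, ∀ y ∈ R, ⁅x, y⁆ ∈ R)
    (hM : ∀ x ∈ M, ∀ y ∈ M, ⁅x, y⁆ ∈ M)
    (hMm : ∀ x ∈ Mm, ∀ y ∈ Mm, ⁅x, y⁆ ∈ Mm)
    -- `[r,m] ⊆ m` and `[r,m⁻] ⊆ m⁻`
    (hRM : ∀ x ∈ R, ∀ y ∈ M, ⁅x, y⁆ ∈ M)
    (hRMm : ∀ x ∈ R, ∀ y ∈ Mm, ⁅x, y⁆ ∈ Mm) :
    ∀ x ∈ R ⊔ M, ∀ x' ∈ R ⊔ M, ∀ y ∈ R ⊔ Mm,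
      (fun a b => ⁅prr a, b⁆ + prr ⁅prm a, b⁆) x
          ((fun a b => ⁅prr a, b⁆ + prr ⁅prm a, b⁆) x' y)
        - (fun a b => ⁅prr a, b⁆ + prr ⁅prm a, b⁆) x'
          ((fun a b => ⁅prr a, b⁆ + prr ⁅prm a, b⁆) x y)
      = (fun a b => ⁅prr a, b⁆ + prr ⁅prm a, b⁆) (⁅x, x'⁆ - ⁅prm x, prm x'⁆) y :=
  coadjoint_action_is_lie_morphism_general R M Mm prr prm hprr hprm hprrR hprrM hprrMm hprmR hprmM
    hdecomp hR hRM hRMm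
end

section
/- Let F_k(V(λ)) = U_k(m⁻)·V'(λ) be the generalized PBW filtration and θ : S(m⁻) → U(m⁻) the symmetrization with U^k(m⁻) = θ(S_k(m⁻)). Then one can choose U(r)-module complements F^k(V(λ)) with F_k(V(λ)) = F^k(V(λ)) ⊕ F_{k−1}(V(λ)) such that F^k(V(λ)) ⊆ U^k(m⁻)·V'(λ) for every k. -/
namespace Stmt9

variable {k : Type*} [Field k] {g : Type*} [LieRing g] [LieAlgebra k g]
variable {V : Type*} [AddCommGroup V] [Module k V] [LieRingModule g V] [LieModule k g V]

/-- `genFilt S W n = U_n(S)·W`: the standard-degree filtration of the action of words in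
elements of the subspace `S ⊆ g` (of length at most `n`) on a subspace `W ⊆ V`. -/
def genFilt (S : Submodule k g) (W : Submodule k V) : ℕ → Submodule k V
  | 0 => W
  | n + 1 =>
      genFilt S W n ⊔ Submodule.span k {v | ∃ x ∈ S, ∃ w ∈ genFilt S W n, v = ⁅x, w⁆}

/-- `SymSpan mm W n = U^n(m⁻)·W = θ(S_n(m⁻))·W`: the span of symmetrized words
`θ(y₁⋯y_n)·w = Σ_σ y_{σ(1)}⋯y_{σ(n)}·w` (up to the harmless factor `n!`), with
`y_i ∈ m⁻` and `w ∈ W`. -/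
def SymSpan (mm : Submodule k g) (W : Submodule k V) (n : ℕ) : Submodule k V :=
  Submodule.span k {u | ∃ y : Fin n → g, (∀ i, y i ∈ mm) ∧ ∃ w ∈ W,
    u = ∑ σ : Equiv.Perm (Fin n),
          (List.ofFn fun i => y (σ i)).foldr (fun x acc => ⁅x, acc⁆) w}

set_option linter.unusedSectionVars false

/-- word action -/
def wrd (l : List g) (w : V) : V := l.foldr (fun x acc => ⁅x, acc⁆) w

@[simp] lemma wrd_nil (w : V) : wrd ([] : List g) w = w := rfl

@[simp] lemma wrd_cons (a : g) (l : List g) (w : V) : wrd (a :: l) w = ⁅a, wrd l w⁆ := rfl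

lemma lie_finsum {ι : Type*} (z : g) (s : Finset ι) (f : ι → V) :
    ⁅z, ∑ i ∈ s, f i⁆ = ∑ i ∈ s, ⁅z, f i⁆ := by
  classical
  induction s using Finset.induction with
  | empty => simp
  | @insert _ _ h ih => rw [Finset.sum_insert h, Finset.sum_insert h, lie_add, ih]

lemma genFilt_le_succ (S : Submodule k g) (W : Submodule k V) (n : ℕ) :
    genFilt S W n ≤ genFilt S W (n + 1) := le_sup_left

lemma genFilt_mono (S : Submodule k g) (W : Submodule k V) : Monotone (genFilt S W) :=
  monotone_nat_of_le_succ (genFilt_le_succ S W)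

lemma lie_mem_genFilt_succ {S : Submodule k g} {W : Submodule k V} {x : g} (hx : x ∈ S)
    {w : V} {n : ℕ} (hw : w ∈ genFilt S W n) : ⁅x, w⁆ ∈ genFilt S W (n + 1) :=
  Submodule.mem_sup_right (Submodule.subset_span ⟨x, hx, w, hw, rfl⟩)

lemma wrd_mem_genFilt {S : Submodule k g} {W : Submodule k V} :
    ∀ (l : List g), (∀ x ∈ l, x ∈ S) → ∀ {w : V}, w ∈ W →
      wrd l w ∈ genFilt S W l.length := by
  intro l
  induction l with
  | nil => intro _ w hw; exact hw
  | cons a t ih =>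
    intro hmem w hw
    exact lie_mem_genFilt_succ (hmem a List.mem_cons_self)
      (ih (fun x hx => hmem x (List.mem_cons_of_mem a hx)) hw)

/-- derivation property of the word action -/
lemma lie_wrd_ofFn (z : g) : ∀ (m : ℕ) (y : Fin m → g) (w : V),
    ⁅z, wrd (List.ofFn y) w⁆ =
      (∑ i : Fin m, wrd (List.ofFn (Function.update y i ⁅z, y i⁆)) w)
        + wrd (List.ofFn y) ⁅z, w⁆ := by
  intro m
  induction m with
  | zero => intro y w; simp
  | succ m ih =>
    intro y w
    have h0 : List.ofFn (Function.update y 0 ⁅z, y 0⁆)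
        = ⁅z, y 0⁆ :: List.ofFn (fun i : Fin m => y i.succ) := by
      rw [List.ofFn_succ, Function.update_self]
      exact congrArg _ (congrArg List.ofFn (funext fun i =>
        Function.update_of_ne (Fin.succ_ne_zero i) _ _))
    have hsucc : ∀ j : Fin m,
        List.ofFn (Function.update y j.succ ⁅z, y j.succ⁆)
          = y 0 :: List.ofFn (Function.update (fun i : Fin m => y i.succ) j ⁅z, y j.succ⁆) := by
      intro j
      rw [List.ofFn_succ, Function.update_of_ne (Fin.succ_ne_zero j).symm]
      refine congrArg _ (congrArg List.ofFn (funext fun i => ?_))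
      by_cases h : i = j
      · subst h; simp
      · rw [Function.update_of_ne (fun hc => h (Fin.succ_injective _ hc)),
          Function.update_of_ne h]
    rw [List.ofFn_succ, wrd_cons, leibniz_lie, Fin.sum_univ_succ, h0, wrd_cons]
    rw [ih (fun i => y i.succ) w]
    rw [lie_add, lie_finsum]
    rw [add_assoc]
    congr 2
    refine Finset.sum_congr rfl fun j _ => ?_
    rw [hsucc j, wrd_cons]

lemma wrd_perm_sub_mem {S : Submodule k g} {W : Submodule k V}
    (hS : ∀ x ∈ S, ∀ y ∈ S, ⁅x, y⁆ ∈ S) :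
    ∀ {l₁ l₂ : List g}, l₁.Perm l₂ → (∀ x ∈ l₁, x ∈ S) → ∀ {w : V}, w ∈ W →
      ∀ n : ℕ, l₁.length ≤ n + 1 → wrd l₁ w - wrd l₂ w ∈ genFilt S W n := by
  intro l₁ l₂ hp
  induction hp with
  | nil =>
    intro _ w hw n _
    simpa using (genFilt S W n).zero_mem
  | cons x hp ih =>
    rename_i t₁ t₂
    intro hmem w hw n hlen
    have hx : x ∈ S := hmem x List.mem_cons_self
    have hmem' : ∀ a ∈ t₁, a ∈ S := fun a ha => hmem a (List.mem_cons_of_mem x ha)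
    cases n with
    | zero =>
      have ht : t₁ = [] := by
        have : t₁.length = 0 := by simpa using hlen
        exact List.length_eq_zero_iff.mp this
      subst ht
      have ht2 : t₂ = [] := hp.symm.eq_nil
      subst ht2
      simpa using (genFilt S W 0).zero_mem
    | succ n =>
      have h1 : wrd t₁ w - wrd t₂ w ∈ genFilt S W n := by
        refine ih hmem' hw n ?_
        simpa using Nat.le_of_succ_le_succ hlen
      have := lie_mem_genFilt_succ hx h1
      simpa [lie_sub] using this
  | swap a b l =>
    intro hmem w hw n hlen
    -- lists: (b :: a :: l) ~ (a :: b :: l)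
    have ha : a ∈ S := hmem a (by simp)
    have hb : b ∈ S := hmem b (by simp)
    have hmem' : ∀ x ∈ l, x ∈ S := fun x hx => hmem x (by simp [hx])
    have hu : wrd l w ∈ genFilt S W l.length := wrd_mem_genFilt l hmem' hw
    have heq : wrd (b :: a :: l) w - wrd (a :: b :: l) w = ⁅⁅b, a⁆, wrd l w⁆ := by
      simp only [wrd_cons]
      rw [leibniz_lie]
      abel
    rw [heq]
    have hlen' : l.length + 1 ≤ n := by
      simpa [Nat.succ_le_iff, Nat.lt_succ_iff] using hlen
    exact genFilt_mono S W hlen' (lie_mem_genFilt_succ (hS b hb a ha) hu)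
  | trans hp1 hp2 ih1 ih2 =>
    rename_i l₁ l₂ l₃
    intro hmem w hw n hlen
    have hmem2 : ∀ x ∈ l₂, x ∈ S := fun x hx => hmem x (hp1.mem_iff.mpr hx)
    have hlen2 : l₂.length ≤ n + 1 := by rw [← hp1.length_eq]; exact hlen
    have := (genFilt S W n).add_mem (ih1 hmem hw n hlen) (ih2 hmem2 hw n hlen2)
    simpa using this

lemma genFilt_le_span_words (S : Submodule k g) (W : Submodule k V) : ∀ n : ℕ,
    genFilt S W n ≤ Submodule.span k {v | ∃ m : ℕ, m ≤ n ∧ ∃ y : Fin m → g,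
      (∀ i, y i ∈ S) ∧ ∃ w ∈ W, v = wrd (List.ofFn y) w} := by
  intro n
  induction n with
  | zero =>
    intro w hw
    exact Submodule.subset_span ⟨0, le_refl 0, Fin.elim0, (fun i => i.elim0), w, hw, by simp⟩
  | succ n ih =>
    show genFilt S W n ⊔ _ ≤ _
    refine sup_le (le_trans ih (Submodule.span_mono ?_)) (Submodule.span_le.2 ?_)
    · rintro v ⟨m, hm, y, hy, w, hw, rfl⟩
      exact ⟨m, hm.trans (Nat.le_succ n), y, hy, w, hw, rfl⟩
    · rintro v ⟨x, hx, w, hw, rfl⟩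
      have hw' := ih hw
      refine Submodule.span_induction
        (p := fun v _ => ⁅x, v⁆ ∈ Submodule.span k {v | ∃ m : ℕ, m ≤ n + 1 ∧ ∃ y : Fin m → g,
          (∀ i, y i ∈ S) ∧ ∃ w ∈ W, v = wrd (List.ofFn y) w}) ?_ ?_ ?_ ?_ hw'
      · rintro v ⟨m, hm, y, hy, w', hw', rfl⟩
        refine Submodule.subset_span ⟨m + 1, Nat.succ_le_succ hm, Fin.cons x y, ?_, w', hw', ?_⟩
        · intro i
          refine Fin.cases ?_ ?_ i
          · simpa using hx
          · intro j; simpa using hy j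
        · rw [List.ofFn_succ]
          simp
      · simp
      · intro a b _ _ ha hb
        rw [lie_add]
        exact Submodule.add_mem _ ha hb
      · intro c a _ ha
        rw [lie_smul]
        exact Submodule.smul_mem _ c ha


lemma symSpan_le_genFilt (mm : Submodule k g) (V' : Submodule k V) (n : ℕ) :
    SymSpan mm V' n ≤ genFilt mm V' n := by
  refine Submodule.span_le.2 ?_
  rintro u ⟨y, hy, w, hw, rfl⟩
  refine Submodule.sum_mem _ fun σ _ => ?_
  have := wrd_mem_genFilt (S := mm) (W := V') (List.ofFn fun i => y (σ i))
    (List.forall_mem_ofFn_iff.2 fun i => hy (σ i)) hw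
  simpa [wrd] using this

lemma le_symSpan_zero (mm : Submodule k g) (V' : Submodule k V) :
    V' ≤ SymSpan mm V' 0 := by
  intro w hw
  refine Submodule.subset_span ⟨Fin.elim0, (fun i => i.elim0), w, hw, ?_⟩
  simp

lemma genFilt_stable {R mm : Submodule k g} {V' : Submodule k V}
    (hRmm : ∀ x ∈ R, ∀ y ∈ mm, ⁅x, y⁆ ∈ mm)
    (hV'R : ∀ z ∈ R, ∀ w ∈ V', ⁅z, w⁆ ∈ V') :
    ∀ n : ℕ, ∀ z ∈ R, ∀ w ∈ genFilt mm V' n, ⁅z, w⁆ ∈ genFilt mm V' n := by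
  intro n
  induction n with
  | zero => exact hV'R
  | succ n ih =>
    intro z hz w hw
    rcases Submodule.mem_sup.1 hw with ⟨a, ha, b, hb, rfl⟩
    rw [lie_add]
    refine Submodule.add_mem _ (genFilt_le_succ mm V' n (ih z hz a ha)) ?_
    refine Submodule.span_induction
      (p := fun v _ => ⁅z, v⁆ ∈ genFilt mm V' (n + 1)) ?_ ?_ ?_ ?_ hb
    · rintro v ⟨x, hx, w', hw', rfl⟩
      rw [leibniz_lie]
      exact Submodule.add_mem _ (lie_mem_genFilt_succ (hRmm z hz x hx) hw')
        (lie_mem_genFilt_succ hx (ih z hz w' hw'))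
    · simp
    · intro a b _ _ ha hb
      rw [lie_add]; exact Submodule.add_mem _ ha hb
    · intro c a _ ha
      rw [lie_smul]; exact Submodule.smul_mem _ c ha

lemma symSpan_stable {R mm : Submodule k g} {V' : Submodule k V}
    (hRmm : ∀ x ∈ R, ∀ y ∈ mm, ⁅x, y⁆ ∈ mm)
    (hV'R : ∀ z ∈ R, ∀ w ∈ V', ⁅z, w⁆ ∈ V') :
    ∀ n : ℕ, ∀ z ∈ R, ∀ u ∈ SymSpan mm V' n, ⁅z, u⁆ ∈ SymSpan mm V' n := by
  intro n z hz u hu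
  refine Submodule.span_induction
    (p := fun v _ => ⁅z, v⁆ ∈ SymSpan mm V' n) ?_ ?_ ?_ ?_ hu
  · rintro v ⟨y, hy, w, hw, rfl⟩
    show ⁅z, ∑ σ : Equiv.Perm (Fin n), wrd (List.ofFn fun i => y (σ i)) w⁆ ∈ SymSpan mm V' n
    rw [lie_finsum]
    have hterm : ∀ σ : Equiv.Perm (Fin n),
        ⁅z, wrd (List.ofFn fun i => y (σ i)) w⁆ =
          (∑ j : Fin n, wrd (List.ofFn
            (fun i => Function.update y j ⁅z, y j⁆ (σ i))) w)
            + wrd (List.ofFn fun i => y (σ i)) ⁅z, w⁆ := by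
      intro σ
      rw [lie_wrd_ofFn z n (fun i => y (σ i)) w]
      congr 1
      rw [← Equiv.sum_comp σ (fun j => wrd (List.ofFn
            (fun i => Function.update y j ⁅z, y j⁆ (σ i))) w)]
      refine Finset.sum_congr rfl fun i _ => ?_
      congr 1
      exact congrArg List.ofFn
        (Function.update_comp_eq_of_injective' y σ.injective i ⁅z, y (σ i)⁆).symm
    have hEq : ∑ σ : Equiv.Perm (Fin n), ⁅z, wrd (List.ofFn fun i => y (σ i)) w⁆
        = (∑ σ : Equiv.Perm (Fin n), ∑ j : Fin n, wrd (List.ofFn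
            (fun i => Function.update y j ⁅z, y j⁆ (σ i))) w)
          + ∑ σ : Equiv.Perm (Fin n), wrd (List.ofFn fun i => y (σ i)) ⁅z, w⁆ := by
      rw [← Finset.sum_add_distrib]
      exact Finset.sum_congr rfl fun σ _ => hterm σ
    rw [hEq]
    refine Submodule.add_mem _ ?_ ?_
    · rw [Finset.sum_comm]
      refine Submodule.sum_mem _ fun j _ => ?_
      refine Submodule.subset_span ⟨Function.update y j ⁅z, y j⁆, ?_, w, hw, rfl⟩
      intro i
      by_cases h : i = j
      · subst h; simp only [Function.update_self]; exact hRmm z hz (y i) (hy i)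
      · rw [Function.update_of_ne h]; exact hy i
    · exact Submodule.subset_span ⟨y, hy, ⁅z, w⁆, hV'R z hz w hw, rfl⟩
  · simp
  · intro a b _ _ ha hb
    rw [lie_add]; exact Submodule.add_mem _ ha hb
  · intro c a _ ha
    rw [lie_smul]; exact Submodule.smul_mem _ c ha

lemma genFilt_succ_eq [CharZero k] {mm : Submodule k g} {V' : Submodule k V}
    (hmm : ∀ x ∈ mm, ∀ y ∈ mm, ⁅x, y⁆ ∈ mm) (n : ℕ) :
    genFilt mm V' (n + 1) = genFilt mm V' n ⊔ SymSpan mm V' (n + 1) := by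
  refine le_antisymm ?_ (sup_le (genFilt_le_succ mm V' n) (symSpan_le_genFilt mm V' (n + 1)))
  refine le_trans (genFilt_le_span_words mm V' (n + 1)) (Submodule.span_le.2 ?_)
  rintro v ⟨m, hm, y, hy, w, hw, rfl⟩
  rcases Nat.lt_or_ge m (n + 1) with hlt | hge
  · refine Submodule.mem_sup_left ?_
    have := wrd_mem_genFilt (S := mm) (W := V') (List.ofFn y)
      (List.forall_mem_ofFn_iff.2 hy) hw
    rw [List.length_ofFn] at this
    exact genFilt_mono mm V' (Nat.lt_succ_iff.mp hlt) this
  · obtain rfl : m = n + 1 := le_antisymm hm hge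
    set c : ℕ := Fintype.card (Equiv.Perm (Fin (n + 1))) with hc
    set s : V := ∑ σ : Equiv.Perm (Fin (n + 1)), wrd (List.ofFn fun i => y (σ i)) w with hs
    have hsmem : s ∈ SymSpan mm V' (n + 1) := Submodule.subset_span ⟨y, hy, w, hw, rfl⟩
    have hd : s - c • wrd (List.ofFn y) w ∈ genFilt mm V' n := by
      have hsplit : s - c • wrd (List.ofFn y) w
          = ∑ σ : Equiv.Perm (Fin (n + 1)), (wrd (List.ofFn fun i => y (σ i)) w
              - wrd (List.ofFn y) w) := by
        rw [Finset.sum_sub_distrib, Finset.sum_const, Finset.card_univ, hs]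
      rw [hsplit]
      refine Submodule.sum_mem _ fun σ _ => ?_
      refine wrd_perm_sub_mem hmm (σ.ofFn_comp_perm y)
        (List.forall_mem_ofFn_iff.2 fun i => hy (σ i)) hw n ?_
      simp
    have hck : (c : k) ≠ 0 := Nat.cast_ne_zero.2 Fintype.card_ne_zero
    have heq : wrd (List.ofFn y) w = (c : k)⁻¹ • (s - (s - c • wrd (List.ofFn y) w)) := by
      rw [sub_sub_cancel, ← Nat.cast_smul_eq_nsmul k c, smul_smul, inv_mul_cancel₀ hck, one_smul]
    rw [heq]
    exact Submodule.smul_mem _ _ (Submodule.sub_mem _ (Submodule.mem_sup_right hsmem)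
      (Submodule.mem_sup_left hd))


/-- **Choice of `U(r)`-stable complements inside `U^k(m⁻)·V′(λ)`.**
Setting: `V = V(λ)`, `V' = U(r)·v_λ`, `F_k = U_k(m⁻)·V′ = genFilt mm V'` the generalized
PBW filtration; `r` reductive so that finite-dimensional `U(r)`-modules are semisimple,
which is encoded by the hypothesis `hcompl` (every `r`-stable subspace of an `r`-stable
subspace admits an `r`-stable complement).  The claim: one can choose `U(r)`-module
complements `C k` (`= F^k(V(λ))`) with `F_k = C k ⊕ F_{k−1}` and
`C k ⊆ U^k(m⁻)·V′(λ) = SymSpan mm V' k`. -/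
theorem exists_ad_stable_complements_in_symmetrized_part
    [CharZero k] [FiniteDimensional k V]
    (R mm : Submodule k g) (V' : Submodule k V)
    (hR : ∀ x ∈ R, ∀ y ∈ R, ⁅x, y⁆ ∈ R)
    (hmm : ∀ x ∈ mm, ∀ y ∈ mm, ⁅x, y⁆ ∈ mm)
    (hRmm : ∀ x ∈ R, ∀ y ∈ mm, ⁅x, y⁆ ∈ mm)
    (hV'R : ∀ z ∈ R, ∀ w ∈ V', ⁅z, w⁆ ∈ V')
    -- semisimplicity of finite-dimensional `U(r)`-modules:
    (hcompl : ∀ W₁ W₂ : Submodule k V,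
      (∀ z ∈ R, ∀ w ∈ W₁, ⁅z, w⁆ ∈ W₁) → (∀ z ∈ R, ∀ w ∈ W₂, ⁅z, w⁆ ∈ W₂) →
      W₁ ≤ W₂ → ∃ C : Submodule k V,
        (∀ z ∈ R, ∀ w ∈ C, ⁅z, w⁆ ∈ C) ∧ C ⊓ W₁ = ⊥ ∧ C ⊔ W₁ = W₂) :
    ∃ C : ℕ → Submodule k V,
      -- each `C k` is a `U(r)`-submodule …
      (∀ n : ℕ, ∀ z ∈ R, ∀ w ∈ C n, ⁅z, w⁆ ∈ C n) ∧
      -- … contained in `U^k(m⁻)·V′(λ)` …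
      (∀ n : ℕ, C n ≤ SymSpan mm V' n) ∧
      -- … and complementing `F_{k−1}` inside `F_k`.
      C 0 = genFilt mm V' 0 ∧
      (∀ n : ℕ, C (n + 1) ⊓ genFilt mm V' n = ⊥ ∧
        C (n + 1) ⊔ genFilt mm V' n = genFilt mm V' (n + 1)) := by
  classical
  have hstabF := genFilt_stable (mm := mm) (V' := V') hRmm hV'R
  have hstabS := symSpan_stable (mm := mm) (V' := V') hRmm hV'R
  have key := genFilt_succ_eq (k := k) (mm := mm) (V' := V') hmm
  have hex : ∀ n : ℕ, ∃ C : Submodule k V,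
      (∀ z ∈ R, ∀ w ∈ C, ⁅z, w⁆ ∈ C) ∧
      C ⊓ (SymSpan mm V' (n + 1) ⊓ genFilt mm V' n) = ⊥ ∧
      C ⊔ (SymSpan mm V' (n + 1) ⊓ genFilt mm V' n) = SymSpan mm V' (n + 1) := by
    intro n
    refine hcompl _ _ ?_ (hstabS (n + 1)) inf_le_left
    intro z hz w hw
    rcases Submodule.mem_inf.1 hw with ⟨hw1, hw2⟩
    exact Submodule.mem_inf.2 ⟨hstabS (n + 1) z hz w hw1, hstabF n z hz w hw2⟩
  choose Cf h1 h2 h3 using hex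
  refine ⟨fun n => Nat.casesOn n (genFilt mm V' 0) Cf, ?_, ?_, rfl, ?_⟩
  · intro n
    cases n with
    | zero => exact hV'R
    | succ n => exact h1 n
  · intro n
    cases n with
    | zero => exact le_symSpan_zero mm V'
    | succ n => exact le_sup_left.trans_eq (h3 n)
  · intro n
    constructor
    · rw [eq_bot_iff]
      intro x hx
      rcases Submodule.mem_inf.1 hx with ⟨hx1, hx2⟩
      have hxS : x ∈ SymSpan mm V' (n + 1) := (le_sup_left.trans_eq (h3 n)) hx1
      have hmem : x ∈ Cf n ⊓ (SymSpan mm V' (n + 1) ⊓ genFilt mm V' n) :=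
        Submodule.mem_inf.2 ⟨hx1, Submodule.mem_inf.2 ⟨hxS, hx2⟩⟩
      rw [h2 n] at hmem
      exact hmem
    · have habs : (SymSpan mm V' (n + 1) ⊓ genFilt mm V' n) ⊔ genFilt mm V' n
          = genFilt mm V' n := sup_eq_right.2 inf_le_right
      calc Cf n ⊔ genFilt mm V' n
          = Cf n ⊔ ((SymSpan mm V' (n + 1) ⊓ genFilt mm V' n) ⊔ genFilt mm V' n) := by
            rw [habs]
        _ = (Cf n ⊔ (SymSpan mm V' (n + 1) ⊓ genFilt mm V' n)) ⊔ genFilt mm V' n := by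
            rw [sup_assoc]
        _ = SymSpan mm V' (n + 1) ⊔ genFilt mm V' n := by rw [h3 n]
        _ = genFilt mm V' (n + 1) := by rw [key n, sup_comm]


end Stmt9
end

section
/- Let g be a simple Lie algebra, p̃ = r ⋉ m^a the contraction of a parabolic p = r ⊕ m, and p⁻ the opposite parabolic. For each k ∈ ℕ define K_k : S_k(p̃) × S_k(p⁻) → k by K_k(x₁⋯x_k, y₁⋯y_k) = (1/k!) Σ_{σ ∈ S_k} Π_i K(x_i, y_{σ(i)}), K the Killing form. Then the induced map f_k : S_k(p̃) → S_k(p⁻)*, f_k(m)(n) = K_k(m,n), is an isomorphism of U(p̃)-modules, where S_k(p̃) carries the adjoint action of p̃ extended by derivations and S_k(p⁻)* carries the dual of the coadjoint action ad* of p̃ on S_k(p⁻). -/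
open TensorProduct PiTensorProduct

namespace Stmt16

variable (k : Type*) [Field k] [CharZero k]

/-- The space of symmetric `n`-tensors over `V`, modelling the `n`-th symmetric power
`S_n(V)` (in characteristic zero). -/
noncomputable def SymSub (V : Type*) [AddCommGroup V] [Module k V] (n : ℕ) :
    Submodule k (⨂[k] _ : Fin n, V) :=
  ⨅ σ : Equiv.Perm (Fin n),
    LinearMap.ker ((PiTensorProduct.reindex k (fun _ : Fin n => V) σ).toLinearMap
      - LinearMap.id)

section SymE

variable {V : Type*} [AddCommGroup V] [Module k V] {n : ℕ}

omit [CharZero k] in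
lemma mem_symSub_iff {t : ⨂[k] _ : Fin n, V} :
    t ∈ SymSub k V n ↔ ∀ σ : Equiv.Perm (Fin n),
      reindex k (fun _ : Fin n => V) σ t = t := by
  simp [SymSub, Submodule.mem_iInf, LinearMap.mem_ker, sub_eq_zero]

/-- The symmetrization operator. -/
noncomputable def symE (n : ℕ) : (⨂[k] _ : Fin n, V) →ₗ[k] (⨂[k] _ : Fin n, V) :=
  (n.factorial : k)⁻¹ • ∑ σ : Equiv.Perm (Fin n),
    (reindex k (fun _ : Fin n => V) σ).toLinearMap

omit [CharZero k] in
lemma reindex_symE (τ : Equiv.Perm (Fin n)) (t : ⨂[k] _ : Fin n, V) :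
    reindex k (fun _ : Fin n => V) τ (symE k n t) = symE k n t := by
  simp only [symE, LinearMap.smul_apply, LinearMap.coe_sum, Finset.sum_apply,
    LinearEquiv.coe_coe, map_smul, map_sum]
  congr 1
  rw [← Equiv.sum_comp (Equiv.mulLeft τ⁻¹ : Equiv.Perm (Fin n) ≃ Equiv.Perm (Fin n))]
  refine Finset.sum_congr rfl fun σ _ => ?_
  have h2 := reindex_reindex (R := k) (s := fun _ : Fin n => V) ((Equiv.mulLeft τ⁻¹) σ) τ t
  rw [h2]
  congr 1
  simp [Equiv.Perm.mul_def, Equiv.trans_assoc, Equiv.Perm.inv_def]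

omit [CharZero k] in
lemma symE_mem (t : ⨂[k] _ : Fin n, V) : symE k n t ∈ SymSub k V n :=
  (mem_symSub_iff k).2 fun τ => reindex_symE k τ t

lemma symE_of_mem {t : ⨂[k] _ : Fin n, V} (h : t ∈ SymSub k V n) :
    symE k n t = t := by
  rw [mem_symSub_iff] at h
  simp only [symE, LinearMap.smul_apply, LinearMap.coe_sum, Finset.sum_apply,
    LinearEquiv.coe_coe]
  rw [Finset.sum_congr rfl fun σ _ => h σ]
  simp only [Finset.sum_const, Finset.card_univ, Fintype.card_perm]
  rw [Fintype.card_fin, ← Nat.cast_smul_eq_nsmul k, smul_smul]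
  rw [inv_mul_cancel₀ (by exact_mod_cast Nat.factorial_ne_zero n), one_smul]

lemma symE_idem (t : ⨂[k] _ : Fin n, V) :
    symE k n (symE k n t) = symE k n t :=
  symE_of_mem k (symE_mem k t)

omit [CharZero k] in
lemma symE_tprod (v : Fin n → V) :
    symE k n (tprod k v) = (n.factorial : k)⁻¹ •
      ∑ σ : Equiv.Perm (Fin n), tprod k (fun i => v (σ.symm i)) := by
  simp [symE]

end SymE

section Pairing

variable {k}
variable {L W : Type*} [AddCommGroup L] [Module k L] [AddCommGroup W] [Module k W]

omit [CharZero k]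

/-- The multilinear map `v ↦ (w₁ ⊗ ⋯ ↦ ∏ B (v i) (w i))`. -/
noncomputable def pairML (B : L →ₗ[k] W →ₗ[k] k) (n : ℕ) :
    MultilinearMap k (fun _ : Fin n => L) ((⨂[k] _ : Fin n, W) →ₗ[k] k) where
  toFun v := PiTensorProduct.lift
    ((MultilinearMap.mkPiAlgebra k (Fin n) k).compLinearMap (fun i => B (v i)))
  map_update_add' v i x y := by
    apply PiTensorProduct.ext
    apply MultilinearMap.ext
    intro w
    have h : ∀ u : Fin n → L,
        PiTensorProduct.lift
          ((MultilinearMap.mkPiAlgebra k (Fin n) k).compLinearMap (fun i => B (u i)))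
          (tprod k w)
        = ((MultilinearMap.mkPiAlgebra k (Fin n) k).compLinearMap
            (fun i => (B.flip (w i)))) u := by
      intro u; simp
    simp only [LinearMap.compMultilinearMap_apply, LinearMap.add_apply]
    rw [h, h, h]
    exact ((MultilinearMap.mkPiAlgebra k (Fin n) k).compLinearMap
      (fun i => (B.flip (w i)))).map_update_add v i x y
  map_update_smul' v i c x := by
    apply PiTensorProduct.ext
    apply MultilinearMap.ext
    intro w
    have h : ∀ u : Fin n → L,
        PiTensorProduct.lift
          ((MultilinearMap.mkPiAlgebra k (Fin n) k).compLinearMap (fun i => B (u i)))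
          (tprod k w)
        = ((MultilinearMap.mkPiAlgebra k (Fin n) k).compLinearMap
            (fun i => (B.flip (w i)))) u := by
      intro u; simp
    simp only [LinearMap.compMultilinearMap_apply, LinearMap.smul_apply]
    rw [h, h]
    exact ((MultilinearMap.mkPiAlgebra k (Fin n) k).compLinearMap
      (fun i => (B.flip (w i)))).map_update_smul v i c x

/-- The product pairing `P` on `n`-th tensor powers. -/
noncomputable def pairP (B : L →ₗ[k] W →ₗ[k] k) (n : ℕ) :
    (⨂[k] _ : Fin n, L) →ₗ[k] (⨂[k] _ : Fin n, W) →ₗ[k] k :=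
  PiTensorProduct.lift (pairML B n)

@[simp] lemma pairP_tprod (B : L →ₗ[k] W →ₗ[k] k) (n : ℕ) (v : Fin n → L) (w : Fin n → W) :
    pairP B n (tprod k v) (tprod k w) = ∏ i, B (v i) (w i) := by
  simp [pairP, pairML]

end Pairing

section Bases

variable (V : Type*) [AddCommGroup V] [Module k V]

omit [CharZero k]

/-- `(⨂^n V) ⊗ V ≃ ⨂^(n+1) V`. -/
noncomputable def stepEquiv (n : ℕ) :
    ((⨂[k] _ : Fin n, V) ⊗[k] V) ≃ₗ[k] ⨂[k] _ : Fin (n + 1), V :=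
  (TensorProduct.congr (LinearEquiv.refl k _)
      (subsingletonEquiv (0 : Fin 1) : (⨂[k] _ : Fin 1, V) ≃ₗ[k] V).symm) ≪≫ₗ
    (tmulEquiv k V) ≪≫ₗ reindex k (fun _ => V) finSumFinEquiv

lemma stepEquiv_tprod (n : ℕ) (v : Fin n → V) (x : V) :
    stepEquiv k V n ((tprod k v) ⊗ₜ[k] x) = PiTensorProduct.tprod k (Fin.snoc v x) := by
  have h1 : ((subsingletonEquiv (0 : Fin 1) :
      (⨂[k] _ : Fin 1, V) ≃ₗ[k] V)).symm x = tprod k (fun _ => x) :=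
    (LinearEquiv.symm_apply_eq _).2 (by simp)
  simp only [stepEquiv, LinearEquiv.trans_apply, TensorProduct.congr_tmul,
    LinearEquiv.refl_apply, h1, tmulEquiv_apply, reindex_tprod]
  congr 1
  funext i
  refine Fin.lastCases ?_ (fun j => ?_) i
  · have : finSumFinEquiv.symm (Fin.last n) = Sum.inr (0 : Fin 1) := by
      rw [Equiv.symm_apply_eq]; simp [finSumFinEquiv_apply_right]
      rfl
    simp [this]
  · have : finSumFinEquiv.symm (Fin.castSucc j) = Sum.inl j := by
      rw [Equiv.symm_apply_eq]; simp [finSumFinEquiv_apply_left]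
      rfl
    simp [this]

variable {ι : Type*}

/-- A basis of the `n`-th tensor power built from a basis of `V`. -/
noncomputable def piBasis (b : Module.Basis ι k V) : (n : ℕ) →
    Module.Basis (Fin n → ι) k (⨂[k] _ : Fin n, V)
  | 0 => ((Module.Basis.singleton Unit k).map (isEmptyEquiv (Fin 0)).symm).reindex
      (Equiv.ofUnique Unit (Fin 0 → ι))
  | (n + 1) => (((piBasis b n).tensorProduct b).map (stepEquiv k V n)).reindex
      ((Equiv.prodComm _ _).trans (Fin.snocEquiv (fun _ => ι)))

lemma piBasis_apply (b : Module.Basis ι k V) (n : ℕ) (g : Fin n → ι) :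
    piBasis k V b n g = PiTensorProduct.tprod k (fun i => b (g i)) := by
  induction n with
  | zero =>
    simp only [piBasis, Module.Basis.reindex_apply, Module.Basis.map_apply, Module.Basis.singleton_apply]
    rw [LinearEquiv.symm_apply_eq]
    simp
  | succ n ih =>
    simp only [piBasis, Module.Basis.reindex_apply, Module.Basis.map_apply]
    have hsymm : ((Equiv.prodComm (Fin n → ι) ι).trans
        (Fin.snocEquiv (fun _ => ι))).symm g
        = ((fun i => g (Fin.castSucc i)), g (Fin.last n)) := by
      simp [Fin.snocEquiv, Equiv.prodComm]
      rfl
    rw [hsymm, Module.Basis.tensorProduct_apply, ih, stepEquiv_tprod]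
    congr 1
    funext i
    refine Fin.lastCases ?_ (fun j => ?_) i
    · simp
    · simp

end Bases

section Nondeg

variable {k}
variable {L W : Type*} [AddCommGroup L] [Module k L] [AddCommGroup W] [Module k W]
variable [FiniteDimensional k L] [FiniteDimensional k W]
variable (B : L →ₗ[k] W →ₗ[k] k)

omit [CharZero k]

lemma bEquiv_bijective (hB₁ : ∀ v : L, (∀ w : W, B v w = 0) → v = 0)
    (hB₂ : ∀ w : W, (∀ v : L, B v w = 0) → w = 0) :
    Function.Bijective (B : L →ₗ[k] Module.Dual k W) := by
  have hinj : Function.Injective B := by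
    rw [← LinearMap.ker_eq_bot, Submodule.eq_bot_iff]
    intro v hv
    exact hB₁ v fun w => by
      simpa using LinearMap.congr_fun (LinearMap.mem_ker.1 hv) w
  have hinj' : Function.Injective B.flip := by
    rw [← LinearMap.ker_eq_bot, Submodule.eq_bot_iff]
    intro w hw
    exact hB₂ w fun v => by
      simpa using LinearMap.congr_fun (LinearMap.mem_ker.1 hw) v
  refine ⟨hinj, ?_⟩
  rw [← LinearMap.range_eq_top]
  apply Submodule.eq_top_of_finrank_eq
  rw [LinearMap.finrank_range_of_inj hinj]
  have h1 : Module.finrank k L ≤ Module.finrank k W := by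
    simpa [Subspace.dual_finrank_eq] using LinearMap.finrank_le_finrank_of_injective hinj
  have h2 : Module.finrank k W ≤ Module.finrank k L := by
    simpa [Subspace.dual_finrank_eq] using LinearMap.finrank_le_finrank_of_injective hinj'
  rw [Subspace.dual_finrank_eq]
  omega

/-- `B` as a linear equivalence `L ≃ Dual W`. -/
noncomputable def bEquiv (hB₁ : ∀ v : L, (∀ w : W, B v w = 0) → v = 0)
    (hB₂ : ∀ w : W, (∀ v : L, B v w = 0) → w = 0) : L ≃ₗ[k] Module.Dual k W :=
  LinearEquiv.ofBijective B (bEquiv_bijective B hB₁ hB₂)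

lemma pairP_bijective (hB₁ : ∀ v : L, (∀ w : W, B v w = 0) → v = 0)
    (hB₂ : ∀ w : W, (∀ v : L, B v w = 0) → w = 0) (n : ℕ) :
    Function.Bijective (pairP B n :
      (⨂[k] _ : Fin n, L) →ₗ[k] Module.Dual k (⨂[k] _ : Fin n, W)) := by
  classical
  set bW : Module.Basis (Fin (Module.finrank k W)) k W := Module.finBasis k W
  set bL : Module.Basis (Fin (Module.finrank k W)) k L :=
    bW.dualBasis.map (bEquiv B hB₁ hB₂).symm
  have hBd : ∀ i j, B (bL i) (bW j) = if j = i then 1 else 0 := by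
    intro i j
    have : B (bL i) = bW.dualBasis i := by
      have := (bEquiv B hB₁ hB₂).apply_symm_apply (bW.dualBasis i)
      simpa [bL, Module.Basis.map_apply, bEquiv] using this
    rw [this, Module.Basis.dualBasis_apply_self]
  set TL := piBasis k L bL n
  set TW := piBasis k W bW n
  have key : ∀ g h, pairP B n (TL g) (TW h) = if h = g then 1 else 0 := by
    intro g h
    rw [show TL g = _ from piBasis_apply k L bL n g,
      show TW h = _ from piBasis_apply k W bW n h, pairP_tprod]
    by_cases hgh : h = g
    · subst hgh
      simp [hBd]
    · obtain ⟨i, hi⟩ := Function.ne_iff.1 hgh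
      rw [if_neg hgh]
      refine Finset.prod_eq_zero (Finset.mem_univ i) ?_
      rw [hBd, if_neg hi]
  have claim : (pairP B n : (⨂[k] _ : Fin n, L) →ₗ[k] _)
      = (TW.toDual).comp (TL.equiv TW (Equiv.refl _) : _ →ₗ[k] _) := by
    apply TL.ext
    intro g
    apply TW.ext
    intro h
    simp only [LinearMap.comp_apply, LinearEquiv.coe_coe, Module.Basis.equiv_apply, Equiv.refl_apply]
    rw [key g h, Module.Basis.toDual_apply]
    simp [eq_comm]
  rw [claim, LinearMap.coe_comp, LinearEquiv.coe_coe]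
  refine Function.Bijective.comp ?_ (TL.equiv TW (Equiv.refl _)).bijective
  have h2 : ⇑TW.toDual = ⇑TW.toDualEquiv := funext fun m => (TW.toDualEquiv_apply m).symm
  rw [h2]
  exact TW.toDualEquiv.bijective

end Nondeg

section Kn

variable {k}
variable {L W : Type*} [AddCommGroup L] [Module k L] [AddCommGroup W] [Module k W]
variable (B : L →ₗ[k] W →ₗ[k] k) (n : ℕ)
  (Kn : (⨂[k] _ : Fin n, L) →ₗ[k] (⨂[k] _ : Fin n, W) →ₗ[k] k)
  (hKn : ∀ (v : Fin n → L) (w : Fin n → W),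
      Kn (tprod k v) (tprod k w)
        = (n.factorial : k)⁻¹
            * ∑ σ : Equiv.Perm (Fin n), ∏ i : Fin n, B (v i) (w (σ i)))

include hKn

omit [CharZero k] in
lemma Kn_eq_left : ∀ t s, Kn t s = pairP B n (symE k n t) s := by
  suffices h : Kn = (pairP B n).comp (symE k n) by
    intro t s; rw [h]; rfl
  apply PiTensorProduct.ext
  apply MultilinearMap.ext
  intro v
  apply PiTensorProduct.ext
  apply MultilinearMap.ext
  intro w
  simp only [LinearMap.compMultilinearMap_apply, LinearMap.comp_apply]
  rw [hKn, symE_tprod, map_smul, map_sum, LinearMap.smul_apply, LinearMap.coe_sum,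
    Finset.sum_apply, smul_eq_mul]
  congr 1
  refine Finset.sum_congr rfl fun σ _ => ?_
  rw [pairP_tprod]
  rw [← Equiv.prod_comp σ (fun i => B (v (σ.symm i)) (w i))]
  refine Finset.prod_congr rfl fun i _ => ?_
  rw [Equiv.symm_apply_apply]

omit [CharZero k] in
lemma Kn_eq_right : ∀ t s, Kn t s = pairP B n t (symE k n s) := by
  suffices h : Kn = (pairP B n).compl₂ (symE k n) by
    intro t s; rw [h]; rfl
  apply PiTensorProduct.ext
  apply MultilinearMap.ext
  intro v
  apply PiTensorProduct.ext
  apply MultilinearMap.ext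
  intro w
  simp only [LinearMap.compMultilinearMap_apply, LinearMap.compl₂_apply]
  rw [hKn, symE_tprod, map_smul, map_sum, smul_eq_mul]
  congr 1
  refine Eq.trans ((Equiv.sum_comp (Equiv.inv (Equiv.Perm (Fin n)))
    (fun σ => ∏ i : Fin n, B (v i) (w (σ i)))).symm) ?_
  refine Finset.sum_congr rfl fun σ _ => ?_
  exact (pairP_tprod B n v (fun i => w (σ.symm i))).symm

end Kn

section Inv

variable {k}
variable {L W : Type*} [AddCommGroup L] [Module k L] [AddCommGroup W] [Module k W]
variable (B : L →ₗ[k] W →ₗ[k] k) [LieRing L] [LieAlgebra k L]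
  (ρW : L →ₗ[k] Module.End k W)
  (hinv : ∀ (x v : L) (w : W), B ⁅x, v⁆ w + B v (ρW x w) = 0)
  (n : ℕ)
  (Kn : (⨂[k] _ : Fin n, L) →ₗ[k] (⨂[k] _ : Fin n, W) →ₗ[k] k)
  (hKn : ∀ (v : Fin n → L) (w : Fin n → W),
      Kn (tprod k v) (tprod k w)
        = (n.factorial : k)⁻¹
            * ∑ σ : Equiv.Perm (Fin n), ∏ i : Fin n, B (v i) (w (σ i)))
  (ρLn : L → ((⨂[k] _ : Fin n, L) →ₗ[k] ⨂[k] _ : Fin n, L))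
  (hρLn : ∀ (x : L) (v : Fin n → L),
      ρLn x (tprod k v) = ∑ i : Fin n, tprod k (Function.update v i ⁅x, v i⁆))
  (ρWn : L → ((⨂[k] _ : Fin n, W) →ₗ[k] ⨂[k] _ : Fin n, W))
  (hρWn : ∀ (x : L) (w : Fin n → W),
      ρWn x (tprod k w) = ∑ i : Fin n, tprod k (Function.update w i (ρW x (w i))))

include hinv hKn hρLn hρWn

omit [CharZero k] [LieAlgebra k L] in
lemma invariance : ∀ (x : L) (t : ⨂[k] _ : Fin n, L) (s : ⨂[k] _ : Fin n, W),
    Kn (ρLn x t) s + Kn t (ρWn x s) = 0 := by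
  intro x t s
  have key : (Kn.comp (ρLn x)) + (Kn.compl₂ (ρWn x)) = 0 := by
    apply PiTensorProduct.ext
    apply MultilinearMap.ext
    intro v
    apply PiTensorProduct.ext
    apply MultilinearMap.ext
    intro w
    simp only [LinearMap.compMultilinearMap_apply, LinearMap.add_apply, LinearMap.comp_apply,
      LinearMap.compl₂_apply, LinearMap.zero_apply]
    rw [hρLn, hρWn, map_sum, map_sum, LinearMap.coe_sum, Finset.sum_apply]
    rw [Finset.sum_congr rfl fun i _ => hKn (Function.update v i ⁅x, v i⁆) w,
      Finset.sum_congr rfl fun i _ => hKn v (Function.update w i (ρW x (w i)))]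
    rw [← Finset.mul_sum, ← Finset.mul_sum, ← mul_add,
      Finset.sum_comm (s := (Finset.univ : Finset (Fin n)))
        (t := (Finset.univ : Finset (Equiv.Perm (Fin n))))
        (f := fun i σ => ∏ j : Fin n, B (Function.update v i ⁅x, v i⁆ j) (w (σ j))),
      Finset.sum_comm (s := (Finset.univ : Finset (Fin n)))
        (t := (Finset.univ : Finset (Equiv.Perm (Fin n))))
        (f := fun i σ => ∏ j : Fin n, B (v j) (Function.update w i (ρW x (w i)) (σ j))),
      ← Finset.sum_add_distrib]
    rw [Finset.sum_eq_zero, mul_zero]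
    intro σ _
    have hre : ∑ i : Fin n, ∏ j : Fin n, B (v j) (Function.update w i (ρW x (w i)) (σ j))
        = ∑ i : Fin n, ∏ j : Fin n,
            B (v j) (Function.update w (σ i) (ρW x (w (σ i))) (σ j)) :=
      (Equiv.sum_comp σ fun i => ∏ j : Fin n,
        B (v j) (Function.update w i (ρW x (w i)) (σ j))).symm
    rw [hre, ← Finset.sum_add_distrib]
    refine Finset.sum_eq_zero fun i _ => ?_
    set g : Fin n → k := fun j => B (v j) (w (σ j)) with hg
    have hA : ∏ j : Fin n, B (Function.update v i ⁅x, v i⁆ j) (w (σ j))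
        = ∏ j : Fin n, Function.update g i (B ⁅x, v i⁆ (w (σ i))) j := by
      refine Finset.prod_congr rfl fun j _ => ?_
      rcases eq_or_ne j i with rfl | h
      · simp [hg]
      · simp [Function.update_of_ne h, hg]
    have hC : ∏ j : Fin n, B (v j) (Function.update w (σ i) (ρW x (w (σ i))) (σ j))
        = ∏ j : Fin n, Function.update g i (B (v i) (ρW x (w (σ i)))) j := by
      refine Finset.prod_congr rfl fun j _ => ?_
      rcases eq_or_ne j i with rfl | h
      · simp [hg]
      · rw [Function.update_of_ne (fun hc => h (σ.injective hc)),
          Function.update_of_ne h]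
    rw [hA, hC, Finset.prod_update_of_mem (Finset.mem_univ i),
      Finset.prod_update_of_mem (Finset.mem_univ i), ← add_mul, hinv, zero_mul]
  have h := LinearMap.congr_fun (LinearMap.congr_fun key t) s
  simpa using h

end Inv

/-- **`f_k : S_k(p̃) ≅ S_k(p⁻)*` as `U(p̃)`-modules via the extended Killing pairing.**
Here `L = p̃ = r ⋉ mᵃ` (a Lie algebra acting on itself by its adjoint action), `W = p⁻`
carries the coadjoint action `ρW` of `p̃`, and `B` is the (restriction of the) Killing
form of `g`, a nondegenerate pairing `p̃ × p⁻ → k` satisfying the invariance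
`K([x,a]_p̃, b) = −K(a, ad*x(b))` (`hinv`).  On `n`-th tensor powers, `K_n` is the
pairing `K_n(x₁⋯x_n, y₁⋯y_n) = (1/n!) Σ_{σ ∈ S_n} Π_i K(x_i, y_{σ(i)})` (`hKn`), and
`ρLn`, `ρWn` are the actions of `p̃` extended by derivations (`hρLn`, `hρWn`).  Claims:
the induced map `f_n : t ↦ K_n(t, −)` intertwines the `p̃`-actions
(`K_n(x·t, s) + K_n(t, x·s) = 0`, so `f_n(x·t) = x·f_n(t)` for the dual action) and
restricts to a bijection from the symmetric tensors `S_n(p̃)` onto the dual of the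
symmetric tensors `S_n(p⁻)`; i.e. `f_n : S_n(p̃) ≅ S_n(p⁻)*` is an isomorphism of
`U(p̃)`-modules. -/
theorem symmetric_power_killing_pairing_isomorphism
    (L : Type*) [LieRing L] [LieAlgebra k L] [FiniteDimensional k L]
    (W : Type*) [AddCommGroup W] [Module k W] [FiniteDimensional k W]
    (B : L →ₗ[k] W →ₗ[k] k)
    -- `B` is a nondegenerate pairing …
    (hB₁ : ∀ v : L, (∀ w : W, B v w = 0) → v = 0)
    (hB₂ : ∀ w : W, (∀ v : L, B v w = 0) → w = 0)
    -- … invariant for the adjoint action on `L = p̃` and the coadjoint action `ρW` on `W = p⁻`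
    (ρW : L →ₗ[k] Module.End k W)
    (hinv : ∀ (x v : L) (w : W), B ⁅x, v⁆ w + B v (ρW x w) = 0)
    (n : ℕ)
    -- the pairing `K_n` on `n`-th (symmetric) tensor powers
    (Kn : (⨂[k] _ : Fin n, L) →ₗ[k] (⨂[k] _ : Fin n, W) →ₗ[k] k)
    (hKn : ∀ (v : Fin n → L) (w : Fin n → W),
      Kn (tprod k v) (tprod k w)
        = (n.factorial : k)⁻¹
            * ∑ σ : Equiv.Perm (Fin n), ∏ i : Fin n, B (v i) (w (σ i)))
    -- the actions of `p̃` on the tensor powers, extended by derivations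
    (ρLn : L → ((⨂[k] _ : Fin n, L) →ₗ[k] ⨂[k] _ : Fin n, L))
    (hρLn : ∀ (x : L) (v : Fin n → L),
      ρLn x (tprod k v) = ∑ i : Fin n, tprod k (Function.update v i ⁅x, v i⁆))
    (ρWn : L → ((⨂[k] _ : Fin n, W) →ₗ[k] ⨂[k] _ : Fin n, W))
    (hρWn : ∀ (x : L) (w : Fin n → W),
      ρWn x (tprod k w) = ∑ i : Fin n, tprod k (Function.update w i (ρW x (w i)))) :
    -- `f_n` is `U(p̃)`-equivariant …
    (∀ (x : L) (t : ⨂[k] _ : Fin n, L) (s : ⨂[k] _ : Fin n, W),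
      Kn (ρLn x t) s + Kn t (ρWn x s) = 0) ∧
    -- … and restricts to a bijection `S_n(p̃) → (S_n(p⁻))*`.
    Function.Bijective
      (fun t : ↥(SymSub k L n) =>
        ((Kn (t : ⨂[k] _ : Fin n, L)).comp (SymSub k W n).subtype
          : Module.Dual k ↥(SymSub k W n))) := by
  classical
  refine ⟨invariance B ρW hinv n Kn hKn ρLn hρLn ρWn hρWn, ?_⟩
  have hKA := Kn_eq_left B n Kn hKn
  have hKB := Kn_eq_right B n Kn hKn
  have hPbij := pairP_bijective B hB₁ hB₂ n
  constructor
  · rintro ⟨t1, ht1⟩ ⟨t2, ht2⟩ h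
    simp only at h
    apply Subtype.ext
    apply hPbij.1
    apply LinearMap.ext
    intro s
    have step : ∀ (t : ⨂[k] _ : Fin n, L), t ∈ SymSub k L n →
        pairP B n t s = Kn t (symE k n s) := by
      intro t ht
      calc pairP B n t s = pairP B n (symE k n t) s := by rw [symE_of_mem k ht]
        _ = Kn t s := (hKA t s).symm
        _ = pairP B n t (symE k n s) := hKB t s
        _ = pairP B n (symE k n t) (symE k n s) := by rw [symE_of_mem k ht]
        _ = Kn t (symE k n s) := (hKA t _).symm
    rw [step t1 ht1, step t2 ht2]
    have := LinearMap.congr_fun h ⟨symE k n s, symE_mem k s⟩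
    simpa using this
  · intro φ
    obtain ⟨u, hu⟩ := hPbij.2
      (φ.comp ((symE k n).codRestrict (SymSub k W n) (symE_mem k)))
    refine ⟨⟨symE k n u, symE_mem k u⟩, ?_⟩
    apply LinearMap.ext
    intro s
    have hcalc : Kn (symE k n u) (s : ⨂[k] _ : Fin n, W) = φ s := by
      calc Kn (symE k n u) (s : ⨂[k] _ : Fin n, W)
          = pairP B n (symE k n (symE k n u)) s := hKA _ _
        _ = pairP B n (symE k n u) s := by rw [symE_idem]
        _ = Kn u s := (hKA u s).symm
        _ = pairP B n u (symE k n s) := hKB u s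
        _ = pairP B n u s := by rw [symE_of_mem k s.2]
        _ = φ (((symE k n).codRestrict (SymSub k W n) (symE_mem k)) s) := by
            rw [hu]; rfl
        _ = φ s := by
            congr 1
            exact Subtype.ext (symE_of_mem k s.2)
    simpa using hcalc


end Stmt16
end
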